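/- For a real parameter a, define g₁(x,y) = x·[5(x³+ax²−a⁴x−a⁵−(2/5)a⁴)+2y²] and g₂(x,y) = y·[5(y³+ay²−a⁴y−a⁵−(2/5)a⁴)+2x²]. There exist an open neighborhood U of the origin in ℝ² and ε > 0 such that for every a with 0 < a < ε: the set of common zeroes of g₁ and g₂ in U has exactly 11 elements, and at each of these common zeroes the Jacobian determinant ∂(g₁,g₂)/∂(x,y) is nonzero (i.e. dg₁ ∧ dg₂ ≠ 0 there). -/

import Mathlib

/-- `g₁(x,y) = x·[5(x³+ax²−a⁴x−a⁵−(2/5)a⁴)+2y²]`. -/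
noncomputable def gOne (a : ℝ) (p : ℝ × ℝ) : ℝ :=
  p.1 * (5 * (p.1 ^ 3 + a * p.1 ^ 2 - a ^ 4 * p.1 - a ^ 5 - (2 / 5) * a ^ 4) + 2 * p.2 ^ 2)

/-- `g₂(x,y) = y·[5(y³+ay²−a⁴y−a⁵−(2/5)a⁴)+2x²]`. -/
noncomputable def gTwo (a : ℝ) (p : ℝ × ℝ) : ℝ :=
  p.2 * (5 * (p.2 ^ 3 + a * p.2 ^ 2 - a ^ 4 * p.2 - a ^ 5 - (2 / 5) * a ^ 4) + 2 * p.1 ^ 2)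

/-!
With `q(t) = t³ + a t² − a⁴ t − a⁵ − (2/5) a⁴ = (t + a)(t² − a⁴) − (2/5) a⁴` one has
`g₁ = x (5 q(x) + 2y²)` and `g₂ = y (5 q(y) + 2x²)`. For small `a > 0` the cubic `q` changes sign
at `-a, -2a/3, 0, a`, so it has three simple roots in `(-a, a)`; together with the origin they give
seven zeros on the axes. Off the axes, `u = x² − a⁴` and `v = y² − a⁴` solve the linear system
`5(x + a) u + 2 v = 0 = 2 u + 5(y + a) v`, whose determinant `25(x + a)(y + a) − 4` is nonzero near
the origin, so `x² = y² = a⁴`: these are the four zeros `(±a², ±a²)`. At those four the Jacobian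
determinant equals `4 a⁸ (25(x + a)(y + a) − 4)`; at the axis zeros it factors through `q'` at a
simple root.
-/

open ContinuousLinearMap

theorem monic_cubic_vieta {R : Type*} [CommRing R] [NoZeroDivisors R] {b c d r₁ r₂ r₃ : R}
    (h₁₂ : r₁ ≠ r₂) (h₁₃ : r₁ ≠ r₃) (h₂₃ : r₂ ≠ r₃)
    (hr₁ : r₁ ^ 3 + b * r₁ ^ 2 + c * r₁ + d = 0) (hr₂ : r₂ ^ 3 + b * r₂ ^ 2 + c * r₂ + d = 0)
    (hr₃ : r₃ ^ 3 + b * r₃ ^ 2 + c * r₃ + d = 0) :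
    b = -(r₁ + r₂ + r₃) ∧ c = r₁ * r₂ + r₁ * r₃ + r₂ * r₃ ∧ d = -(r₁ * r₂ * r₃) := by
  have h₁₂' : r₁ ^ 2 + r₁ * r₂ + r₂ ^ 2 + b * (r₁ + r₂) + c = 0 := by
    refine (mul_eq_zero.mp ?_).resolve_left (sub_ne_zero.mpr h₁₂)
    linear_combination hr₁ - hr₂
  have h₁₃' : r₁ ^ 2 + r₁ * r₃ + r₃ ^ 2 + b * (r₁ + r₃) + c = 0 := by
    refine (mul_eq_zero.mp ?_).resolve_left (sub_ne_zero.mpr h₁₃)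
    linear_combination hr₁ - hr₃
  have hb : b = -(r₁ + r₂ + r₃) := by
    have : (r₂ - r₃) * (r₁ + r₂ + r₃ + b) = 0 := by linear_combination h₁₂' - h₁₃'
    linear_combination (mul_eq_zero.mp this).resolve_left (sub_ne_zero.mpr h₂₃)
  have hc : c = r₁ * r₂ + r₁ * r₃ + r₂ * r₃ := by linear_combination h₁₂' - (r₁ + r₂) * hb
  exact ⟨hb, hc, by linear_combination hr₁ - r₁ ^ 2 * hb - r₁ * hc⟩

theorem det_prod_smul_fst_add_smul_snd {R : Type*} [CommRing R] [TopologicalSpace R]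
    [IsTopologicalSemiring R] (a b c d : R) :
    LinearMap.det (((a • fst R R R + b • snd R R R).prod (c • fst R R R + d • snd R R R) :
      R × R →L[R] R × R) : R × R →ₗ[R] R × R) = a * d - b * c := by
  rw [← LinearMap.det_toMatrix (Module.Basis.finTwoProd R), Matrix.det_fin_two]
  simp [LinearMap.toMatrix_apply]

noncomputable def cubic (a t : ℝ) : ℝ := t ^ 3 + a * t ^ 2 - a ^ 4 * t - a ^ 5 - 2 / 5 * a ^ 4

def cubicDeriv (a t : ℝ) : ℝ := 3 * t ^ 2 + 2 * a * t - a ^ 4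

theorem cubic_eq (a t : ℝ) : cubic a t = (t + a) * (t ^ 2 - a ^ 4) - 2 / 5 * a ^ 4 := by
  unfold cubic; ring

theorem cubic_zero_lt {a : ℝ} (ha : 0 < a) : cubic a 0 < 0 := by
  unfold cubic; nlinarith [pow_pos ha 4, pow_pos ha 5]

theorem hasDerivAt_cubic (a t : ℝ) : HasDerivAt (cubic a) (cubicDeriv a t) t :=
  (((((hasDerivAt_pow 3 t).add ((hasDerivAt_pow 2 t).const_mul a)).sub
    ((hasDerivAt_id t).const_mul (a ^ 4))).sub_const (a ^ 5)).sub_const (2 / 5 * a ^ 4)).congr_deriv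
    (by norm_num [cubicDeriv]; ring)

theorem exists_roots_cubic {a : ℝ} (ha₀ : 0 < a) (ha : a < 1 / 100) :
    ∃ r₁ r₂ r₃ : ℝ, -a < r₁ ∧ r₁ < r₂ ∧ r₂ < 0 ∧ 0 < r₃ ∧ r₃ < a ∧
      ∀ t, cubic a t = (t - r₁) * (t - r₂) * (t - r₃) ∧
        cubicDeriv a t = (t - r₂) * (t - r₃) + (t - r₁) * (t - r₃) + (t - r₁) * (t - r₂) := by
  have hcont : Continuous (cubic a) := by unfold cubic; fun_prop
  have hsmall₃ := mul_pos (pow_pos ha₀ 3) (by linarith : (0 : ℝ) < 1 / 100 - a)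
  have hsmall₄ := mul_pos (pow_pos ha₀ 4) (by linarith : (0 : ℝ) < 1 / 100 - a)
  have hsmall₅ := mul_pos (pow_pos ha₀ 4) (by linarith : (0 : ℝ) < 1 - a)
  have hneg : cubic a (-a) < 0 := by unfold cubic; nlinarith [pow_pos ha₀ 4]
  have hmid : 0 < cubic a (-(2 / 3) * a) := by unfold cubic; nlinarith
  have hpos : 0 < cubic a a := by unfold cubic; nlinarith
  obtain ⟨r₁, ⟨h₁, h₁₂⟩, hr₁⟩ := intermediate_value_Ioo (by linarith : -a ≤ -(2 / 3) * a)
    hcont.continuousOn ⟨hneg, hmid⟩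
  obtain ⟨r₂, ⟨h₂₁, h₂⟩, hr₂⟩ := intermediate_value_Ioo' (by linarith : -(2 / 3) * a ≤ 0)
    hcont.continuousOn ⟨cubic_zero_lt ha₀, hmid⟩
  obtain ⟨r₃, ⟨h₃, h₃'⟩, hr₃⟩ := intermediate_value_Ioo ha₀.le
    hcont.continuousOn ⟨cubic_zero_lt ha₀, hpos⟩
  have hmonic : ∀ t, cubic a t = t ^ 3 + a * t ^ 2 + (-a ^ 4) * t + (-a ^ 5 - 2 / 5 * a ^ 4) :=
    fun t => by unfold cubic; ring
  obtain ⟨hb, hc, hd⟩ := monic_cubic_vieta (by linarith : r₁ < r₂).ne (by linarith : r₁ < r₃).ne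
    (by linarith : r₂ < r₃).ne ((hmonic r₁).symm.trans hr₁) ((hmonic r₂).symm.trans hr₂)
    ((hmonic r₃).symm.trans hr₃)
  refine ⟨r₁, r₂, r₃, h₁, by linarith, h₂, h₃, h₃', fun t => ⟨?_, ?_⟩⟩
  · rw [hmonic]; linear_combination t ^ 2 * hb + t * hc + hd
  · unfold cubicDeriv; linear_combination 2 * t * hb + hc

theorem cubicDeriv_ne_zero {a r : ℝ} (ha₀ : 0 < a) (ha : a < 1 / 100) (hr : cubic a r = 0) :
    cubicDeriv a r ≠ 0 := by
  obtain ⟨r₁, r₂, r₃, -, h₁₂, h₂, h₃, -, hfac⟩ := exists_roots_cubic ha₀ ha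
  rw [(hfac r).1, mul_eq_zero, mul_eq_zero, sub_eq_zero, sub_eq_zero, sub_eq_zero] at hr
  rw [(hfac r).2]
  rcases hr with (rfl | rfl) | rfl <;> nlinarith

theorem sq_eq_of_cubic {a x y : ℝ} (hdet : 25 * (x + a) * (y + a) ≠ 4)
    (hx : 5 * cubic a x + 2 * y ^ 2 = 0) (hy : 5 * cubic a y + 2 * x ^ 2 = 0) :
    x ^ 2 = a ^ 4 ∧ y ^ 2 = a ^ 4 := by
  rw [cubic_eq] at hx hy
  have hdet' : 25 * (x + a) * (y + a) - 4 ≠ 0 := sub_ne_zero.mpr hdet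
  constructor
  · refine sub_eq_zero.mp ((mul_eq_zero.mp ?_).resolve_right hdet')
    linear_combination 5 * (y + a) * hx - 2 * hy
  · refine sub_eq_zero.mp ((mul_eq_zero.mp ?_).resolve_right hdet')
    linear_combination 5 * (x + a) * hy - 2 * hx

theorem nondegenerate_of_abs_lt {a x y : ℝ} (ha₀ : 0 < a) (ha : a < 1 / 100) (hx : |x| < 1 / 10)
    (hy : |y| < 1 / 10) : 25 * (x + a) * (y + a) ≠ 4 := by
  rw [abs_lt] at hx hy
  intro h
  nlinarith [mul_pos (by linarith : 0 < x + a + 2 / 5) (by linarith : 0 < 2 / 5 - (y + a)),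
    mul_pos (by linarith : 0 < 2 / 5 - (x + a)) (by linarith : 0 < y + a + 2 / 5)]

theorem gOne_eq_zero_and_gTwo_eq_zero_iff {a x y : ℝ} (hdet : 25 * (x + a) * (y + a) ≠ 4) :
    gOne a (x, y) = 0 ∧ gTwo a (x, y) = 0 ↔
      x = 0 ∧ y = 0 ∨ cubic a x = 0 ∧ y = 0 ∨ x = 0 ∧ cubic a y = 0 ∨
        x ^ 2 = a ^ 4 ∧ y ^ 2 = a ^ 4 := by
  have h₁ : gOne a (x, y) = x * (5 * cubic a x + 2 * y ^ 2) := rfl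
  have h₂ : gTwo a (x, y) = y * (5 * cubic a y + 2 * x ^ 2) := rfl
  rw [h₁, h₂, mul_eq_zero, mul_eq_zero]
  constructor
  · rintro ⟨rfl | hx, rfl | hy⟩
    · exact .inl ⟨rfl, rfl⟩
    · exact .inr <| .inr <| .inl ⟨rfl, by linarith⟩
    · exact .inr <| .inl ⟨by linarith, rfl⟩
    · exact .inr <| .inr <| .inr <| sq_eq_of_cubic hdet hx hy
  · rintro (⟨rfl, rfl⟩ | ⟨hx, rfl⟩ | ⟨rfl, hy⟩ | ⟨hx, hy⟩)
    · simp
    · simp [hx]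
    · simp [hy]
    · refine ⟨.inr ?_, .inr ?_⟩ <;> rw [cubic_eq]
      · linear_combination 5 * (x + a) * hx + 2 * hy
      · linear_combination 5 * (y + a) * hy + 2 * hx

theorem hasFDerivAt_gOne (a : ℝ) (p : ℝ × ℝ) :
    HasFDerivAt (gOne a) ((5 * cubic a p.1 + 2 * p.2 ^ 2 + 5 * p.1 * cubicDeriv a p.1) •
      fst ℝ ℝ ℝ + (4 * p.1 * p.2) • snd ℝ ℝ ℝ) p := by
  have hx : HasFDerivAt Prod.fst (fst ℝ ℝ ℝ) p := hasFDerivAt_fst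
  have hy : HasFDerivAt Prod.snd (snd ℝ ℝ ℝ) p := hasFDerivAt_snd
  have hq := (hasDerivAt_cubic a p.1).comp_hasFDerivAt p hx
  refine (hx.mul ((hq.const_mul 5).add ((hy.pow 2).const_mul 2))).congr_fderiv ?_
  ext <;> simp <;> ring

theorem hasFDerivAt_gTwo (a : ℝ) (p : ℝ × ℝ) :
    HasFDerivAt (gTwo a) ((4 * p.1 * p.2) • fst ℝ ℝ ℝ +
      (5 * cubic a p.2 + 2 * p.1 ^ 2 + 5 * p.2 * cubicDeriv a p.2) • snd ℝ ℝ ℝ) p := by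
  have hswap : gTwo a = gOne a ∘ Prod.swap := rfl
  rw [hswap]
  refine ((hasFDerivAt_gOne a p.swap).comp p
    (ContinuousLinearEquiv.prodComm ℝ ℝ ℝ).hasFDerivAt).congr_fderiv ?_
  ext <;> simp; ring

noncomputable def jacobianDet (a x y : ℝ) : ℝ :=
  (5 * cubic a x + 2 * y ^ 2 + 5 * x * cubicDeriv a x) *
    (5 * cubic a y + 2 * x ^ 2 + 5 * y * cubicDeriv a y) - (4 * x * y) ^ 2

theorem jacobianDet_comm (a x y : ℝ) : jacobianDet a x y = jacobianDet a y x := by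
  unfold jacobianDet; ring

theorem det_fderiv_gOne_gTwo (a : ℝ) (p : ℝ × ℝ) :
    LinearMap.det (fderiv ℝ (fun q : ℝ × ℝ => (gOne a q, gTwo a q)) p : ℝ × ℝ →ₗ[ℝ] ℝ × ℝ) =
      jacobianDet a p.1 p.2 := by
  rw [((hasFDerivAt_gOne a p).prodMk (hasFDerivAt_gTwo a p)).fderiv,
    det_prod_smul_fst_add_smul_snd, jacobianDet]
  ring

theorem jacobianDet_zero_zero_ne_zero {a : ℝ} (ha : 0 < a) : jacobianDet a 0 0 ≠ 0 := by
  have := (cubic_zero_lt ha).ne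
  simpa [jacobianDet]

theorem jacobianDet_ne_zero_of_cubic_eq_zero {a r : ℝ} (ha₀ : 0 < a) (ha : a < 1 / 100)
    (hr' : r < 1 / 10) (hr : cubic a r = 0) : jacobianDet a r 0 ≠ 0 := by
  have hr₀ : r ≠ 0 := by rintro rfl; exact (cubic_zero_lt ha₀).ne hr
  -- otherwise the root equation `(r + a)(r² − a⁴) = (2/5) a⁴` forces `25 a (r + a) = 4`
  have h₂₂ : 5 * cubic a 0 + 2 * r ^ 2 ≠ 0 := by
    intro h
    have : a ^ 4 * (25 * a * (r + a) - 4) = 0 := by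
      rw [cubic_eq] at hr h; linear_combination 10 * hr - 5 * (r + a) * h
    have := (mul_eq_zero.mp this).resolve_left (pow_pos ha₀ 4).ne'
    nlinarith
  have : jacobianDet a r 0 = 5 * r * cubicDeriv a r * (5 * cubic a 0 + 2 * r ^ 2) := by
    unfold jacobianDet; rw [hr]; ring
  rw [this]
  exact mul_ne_zero (mul_ne_zero (mul_ne_zero (by norm_num) hr₀) (cubicDeriv_ne_zero ha₀ ha hr)) h₂₂

theorem jacobianDet_ne_zero_of_sq_eq {a x y : ℝ} (ha : a ≠ 0) (hdet : 25 * (x + a) * (y + a) ≠ 4)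
    (hx : x ^ 2 = a ^ 4) (hy : y ^ 2 = a ^ 4) : jacobianDet a x y ≠ 0 := by
  have h₁₁ : 5 * cubic a x + 2 * y ^ 2 + 5 * x * cubicDeriv a x = 10 * a ^ 4 * (x + a) := by
    unfold cubic cubicDeriv; linear_combination (20 * x + 15 * a) * hx + 2 * hy
  have h₂₂ : 5 * cubic a y + 2 * x ^ 2 + 5 * y * cubicDeriv a y = 10 * a ^ 4 * (y + a) := by
    unfold cubic cubicDeriv; linear_combination (20 * y + 15 * a) * hy + 2 * hx
  have h₁₂ : (4 * x * y) ^ 2 = 16 * a ^ 8 := by linear_combination 16 * y ^ 2 * hx + 16 * a ^ 4 * hy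
  rw [jacobianDet, h₁₁, h₂₂, h₁₂, show 10 * a ^ 4 * (x + a) * (10 * a ^ 4 * (y + a)) - 16 * a ^ 8
    = 4 * a ^ 8 * (25 * (x + a) * (y + a) - 4) by ring]
  exact mul_ne_zero (by positivity) (sub_ne_zero.mpr hdet)

theorem jacobianDet_ne_zero {a x y : ℝ} (ha₀ : 0 < a) (ha : a < 1 / 100) (hx : |x| < 1 / 10)
    (hy : |y| < 1 / 10) (hg : gOne a (x, y) = 0 ∧ gTwo a (x, y) = 0) : jacobianDet a x y ≠ 0 := by
  have hdet := nondegenerate_of_abs_lt ha₀ ha hx hy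
  rcases (gOne_eq_zero_and_gTwo_eq_zero_iff hdet).mp hg with
    ⟨rfl, rfl⟩ | ⟨hrx, rfl⟩ | ⟨rfl, hry⟩ | ⟨hx₂, hy₂⟩
  · exact jacobianDet_zero_zero_ne_zero ha₀
  · exact jacobianDet_ne_zero_of_cubic_eq_zero ha₀ ha (abs_lt.mp hx).2 hrx
  · rw [jacobianDet_comm]
    exact jacobianDet_ne_zero_of_cubic_eq_zero ha₀ ha (abs_lt.mp hy).2 hry
  · exact jacobianDet_ne_zero_of_sq_eq ha₀.ne' hdet hx₂ hy₂

theorem mem_ball_zero_prod_iff {x y r : ℝ} :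
    (x, y) ∈ Metric.ball (0 : ℝ × ℝ) r ↔ |x| < r ∧ |y| < r := by
  simp [Prod.norm_def]

noncomputable def zeroFinset (a r₁ r₂ r₃ : ℝ) : Finset (ℝ × ℝ) :=
  {(0, 0), (r₁, 0), (r₂, 0), (r₃, 0), (0, r₁), (0, r₂), (0, r₃),
    (a ^ 2, a ^ 2), (-a ^ 2, a ^ 2), (a ^ 2, -a ^ 2), (-a ^ 2, -a ^ 2)}

theorem card_zeroFinset {a r₁ r₂ r₃ : ℝ} (ha : 0 < a) (h₁₂ : r₁ < r₂) (h₂ : r₂ < 0)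
    (h₃ : 0 < r₃) : (zeroFinset a r₁ r₂ r₃).card = 11 := by
  have ha₂ : a ^ 2 ≠ 0 := by positivity
  have ha₂' : a ^ 2 ≠ -a ^ 2 := by intro h; linarith [pow_pos ha 2]
  simp [zeroFinset, Finset.card_insert_of_notMem, eq_comm, ha₂, ha₂', h₁₂.ne, h₂.ne, h₃.ne',
    (h₁₂.trans h₂).ne, (h₁₂.trans (h₂.trans h₃)).ne, (h₂.trans h₃).ne]

theorem zeroSet_eq {a r₁ r₂ r₃ : ℝ} (ha₀ : 0 < a) (ha : a < 1 / 100) (h₁ : -a < r₁) (h₁₂ : r₁ < r₂)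
    (h₂ : r₂ < 0) (h₃ : 0 < r₃) (h₃' : r₃ < a)
    (hfac : ∀ t, cubic a t = (t - r₁) * (t - r₂) * (t - r₃)) :
    {p : ℝ × ℝ | p ∈ Metric.ball 0 (1 / 10) ∧ gOne a p = 0 ∧ gTwo a p = 0} =
      zeroFinset a r₁ r₂ r₃ := by
  have hroot (t : ℝ) : cubic a t = 0 ↔ t = r₁ ∨ t = r₂ ∨ t = r₃ := by
    rw [hfac, mul_eq_zero, mul_eq_zero, sub_eq_zero, sub_eq_zero, sub_eq_zero, or_assoc]
  have hsq (t : ℝ) : t ^ 2 = a ^ 4 ↔ t = a ^ 2 ∨ t = -a ^ 2 := by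
    rw [show a ^ 4 = (a ^ 2) ^ 2 by ring, sq_eq_sq_iff_eq_or_eq_neg]
  have hcoord (t : ℝ) (ht : t = 0 ∨ t = r₁ ∨ t = r₂ ∨ t = r₃ ∨ t = a ^ 2 ∨ t = -a ^ 2) :
      |t| < 1 / 10 := by
    rw [abs_lt]
    rcases ht with rfl | rfl | rfl | rfl | rfl | rfl <;> constructor <;> nlinarith
  ext ⟨x, y⟩
  simp only [zeroFinset, Set.mem_ofPred_eq, Finset.coe_insert, Finset.coe_singleton,
    Set.mem_insert_iff, Set.mem_singleton_iff, Prod.mk.injEq, mem_ball_zero_prod_iff]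
  constructor
  · rintro ⟨⟨hx, hy⟩, hg⟩
    simpa only [hroot, hsq, or_and_right, and_or_left, or_assoc] using
      (gOne_eq_zero_and_gTwo_eq_zero_iff (nondegenerate_of_abs_lt ha₀ ha hx hy)).mp hg
  · intro h
    have hxy : |x| < 1 / 10 ∧ |y| < 1 / 10 := by
      rcases h with ⟨rfl, rfl⟩ | ⟨rfl, rfl⟩ | ⟨rfl, rfl⟩ | ⟨rfl, rfl⟩ | ⟨rfl, rfl⟩ | ⟨rfl, rfl⟩ |
        ⟨rfl, rfl⟩ | ⟨rfl, rfl⟩ | ⟨rfl, rfl⟩ | ⟨rfl, rfl⟩ | ⟨rfl, rfl⟩ <;>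
        exact ⟨hcoord _ (by simp), hcoord _ (by simp)⟩
    refine ⟨hxy, (gOne_eq_zero_and_gTwo_eq_zero_iff
      (nondegenerate_of_abs_lt ha₀ ha hxy.1 hxy.2)).mpr ?_⟩
    simpa only [hroot, hsq, or_and_right, and_or_left, or_assoc] using h

/-- There are an open neighborhood `U` of the origin in `ℝ²` and `ε > 0` such that for all
`0 < a < ε` the common zero set of `g₁` and `g₂` in `U` is finite with exactly 11 elements,
and at each common zero the Jacobian determinant of `(g₁, g₂)` is nonzero
(`dg₁ ∧ dg₂ ≠ 0`). -/
theorem stmt_14 :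
    ∃ U : Set (ℝ × ℝ), IsOpen U ∧ ((0 : ℝ), (0 : ℝ)) ∈ U ∧
      ∃ ε : ℝ, 0 < ε ∧ ∀ a : ℝ, 0 < a → a < ε →
        {p : ℝ × ℝ | p ∈ U ∧ gOne a p = 0 ∧ gTwo a p = 0}.Finite ∧
        {p : ℝ × ℝ | p ∈ U ∧ gOne a p = 0 ∧ gTwo a p = 0}.ncard = 11 ∧
        ∀ p ∈ {p : ℝ × ℝ | p ∈ U ∧ gOne a p = 0 ∧ gTwo a p = 0},
          LinearMap.det
            ((fderiv ℝ (fun q : ℝ × ℝ => ((gOne a q : ℝ), (gTwo a q : ℝ))) p) :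
              ℝ × ℝ →ₗ[ℝ] ℝ × ℝ) ≠ 0 := by
  refine ⟨Metric.ball 0 (1 / 10), Metric.isOpen_ball, Metric.mem_ball_self (by norm_num),
    1 / 100, by norm_num, fun a ha₀ ha => ?_⟩
  obtain ⟨r₁, r₂, r₃, h₁, h₁₂, h₂, h₃, h₃', hfac⟩ := exists_roots_cubic ha₀ ha
  have hS := zeroSet_eq ha₀ ha h₁ h₁₂ h₂ h₃ h₃' fun t => (hfac t).1
  refine ⟨hS ▸ Finset.finite_toSet _, ?_, ?_⟩
  · rw [hS, Set.ncard_coe_finset, card_zeroFinset ha₀ h₁₂ h₂ h₃]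
  · rintro ⟨x, y⟩ ⟨hxy, hg⟩
    obtain ⟨hx, hy⟩ := mem_ball_zero_prod_iff.mp hxy
    rw [det_fderiv_gOne_gTwo]
    exact jacobianDet_ne_zero ha₀ ha hx hy hg
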